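/- The complete bipartite graph K_{3,n} is Z_2×Z_2-cordial for every n ≥ 3. -/

import Mathlib

open SimpleGraph

/-- Induced edge label: the sum of the endpoint labels. -/
def edgeLabel {V A : Type*} [AddCommMonoid A] (f : V → A) : Sym2 V → A :=
  Sym2.lift ⟨fun u v => f u + f v, fun u v => add_comm (f u) (f v)⟩

/-- `f` is an `A`-cordial labeling of `G`: vertex label classes and induced
edge label classes are balanced. -/
def IsCordialLabeling {V : Type*} [Fintype V] (G : SimpleGraph V) {A : Type*} [AddCommMonoid A]
    (f : V → A) : Prop :=
  (∀ a b : A, |({v : V | f v = a}.ncard : ℤ) - ({v : V | f v = b}.ncard : ℤ)| ≤ 1) ∧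
  (∀ a b : A, |({e ∈ G.edgeSet | edgeLabel f e = a}.ncard : ℤ)
      - ({e ∈ G.edgeSet | edgeLabel f e = b}.ncard : ℤ)| ≤ 1)

/-- `G` is `A`-cordial. -/
def IsCordial {V : Type*} [Fintype V] (G : SimpleGraph V) (A : Type*) [AddCommMonoid A] : Prop :=
  ∃ f : V → A, IsCordialLabeling G f

/-!
Label the part of size `|A| - 1` bijectively by all elements of `A` except one, `m`, and the
other part of size `n` by an equitable labeling `g` (fibre sizes differ by at most one) whose most
frequent value is `m`. A vertex label `t` then occurs `#g⁻¹(t) + [t ≠ m]` times, which is balanced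
because `m` is the most frequent value. An edge label `t` occurs
`∑_{a ≠ m} #g⁻¹(t - a) = n - #g⁻¹(t - m)` times, which is balanced because `g` is equitable.
For `A = ℤ₂ × ℤ₂` the first part has size `3`.
-/

open Finset

variable {X α β A : Type*}

lemma Set.ncard_setOf_eq_card_filter [Fintype X] (p : X → Prop) [DecidablePred p] :
    {x | p x}.ncard = #{x | p x} := by
  rw [← Set.ncard_coe_finset, coe_filter_univ]

lemma Fin.card_filter_val_modEq (n k j : ℕ) (hk : 0 < k) :
    #{i : Fin n | (i : ℕ) ≡ j [MOD k]} = n / k + if j % k < n % k then 1 else 0 := by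
  rw [← Nat.count_modEq_card _ hk, Nat.count_eq_card_filter_range, ← Nat.Iio_eq_range,
    ← Fin.map_valEmbedding_univ, filter_map, card_map]
  rfl

def IsEquitable (g : X → A) : Prop :=
  ∀ a b : A, {x | g x = a}.ncard ≤ {x | g x = b}.ncard + 1

theorem exists_isEquitable (X A : Type*) [Fintype X] [Fintype A] [Nonempty A] :
    ∃ g : X → A, IsEquitable g := by
  classical
  have hk : 0 < Fintype.card A := Fintype.card_pos
  let eX := Fintype.equivFin X
  let eA := Fintype.equivFin A
  refine ⟨fun x ↦ eA.symm ⟨eX x % Fintype.card A, Nat.mod_lt _ hk⟩, fun a b ↦ ?_⟩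
  have fiber (a : A) : {x | eA.symm ⟨eX x % Fintype.card A, Nat.mod_lt _ hk⟩ = a}.ncard
      = #{i : Fin (Fintype.card X) | (i : ℕ) ≡ eA a [MOD Fintype.card A]} := by
    rw [← Set.ncard_setOf_eq_card_filter, ← Set.ncard_preimage_of_injective_subset_range
      eX.injective (by simp)]
    congr 1
    ext x
    simp [Equiv.symm_apply_eq, Fin.ext_iff, Nat.ModEq, Nat.mod_eq_of_lt (eA a).isLt]
  rw [fiber, fiber, Fin.card_filter_val_modEq _ _ _ hk, Fin.card_filter_val_modEq _ _ _ hk]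
  split_ifs <;> omega

lemma ncard_sumElim_fiber [Fintype α] [Fintype β] (u : α → A) (g : β → A) (t : A) :
    {v | Sum.elim u g v = t}.ncard = {x | u x = t}.ncard + {y | g y = t}.ncard := by
  classical
  simp only [Set.ncard_setOf_eq_card_filter, card_filter, Fintype.sum_sum_type]
  rfl

lemma ncard_edgeLabel_fiber_completeBipartiteGraph [AddCommMonoid A] (f : α ⊕ β → A) (t : A) :
    {e ∈ (completeBipartiteGraph α β).edgeSet | edgeLabel f e = t}.ncard
      = {p : α × β | f (.inl p.1) + f (.inr p.2) = t}.ncard := by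
  have hinj : Function.Injective (fun p : α × β ↦ s(Sum.inl p.1, Sum.inr p.2)) := by
    grind [Function.Injective]
  rw [edgeSet_completeBipartiteGraph]
  change (Set.range _ ∩ {e | edgeLabel f e = t}).ncard = _
  rw [← Set.image_preimage_eq_range_inter, Set.ncard_image_of_injective _ hinj]
  rfl

lemma ncard_val_add_fiber_add_ncard_fiber_sub [Fintype α] [Fintype β] [AddCommGroup A]
    [Fintype A] {m : A} (ι : α ≃ {a // a ≠ m}) (g : β → A) (t : A) :
    {p : α × β | (ι p.1 : A) + g p.2 = t}.ncard + {y | g y = t - m}.ncard = Fintype.card β := by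
  classical
  have fiberwise : #{p : α × β | (ι p.1 : A) + g p.2 = t} = ∑ x, #{y | g y = t - ι x} := by
    simp only [card_filter, Fintype.sum_prod_type, eq_sub_iff_add_eq']
  calc _ = ∑ a : {a // a ≠ m}, #{y | g y = t - a} + #{y | g y = t - m} := by
          rw [Set.ncard_setOf_eq_card_filter, Set.ncard_setOf_eq_card_filter, fiberwise,
            ι.sum_comp (fun a ↦ #{y | g y = t - a})]
    _ = ∑ a, #{y | g y = t - a} := by
          rw [Fintype.sum_eq_add_sum_subtype_ne _ m, add_comm]
    _ = ∑ a, #{y | g y = a} := (Equiv.subLeft t).sum_comp (fun a ↦ #{y | g y = a})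
    _ = Fintype.card β := (card_eq_sum_card_fiberwise (by simp)).symm

lemma ncard_fiber_subtypeVal_ne [Finite α] [DecidableEq A] {m : A} (ι : α ≃ {a // a ≠ m})
    (t : A) :
    {x | (ι x : A) = t}.ncard = if t = m then 0 else 1 := by
  split_ifs with ht
  · rw [ht, Set.ncard_eq_zero]
    exact Set.eq_empty_of_forall_notMem fun x ↦ (ι x).2
  · rw [Set.ncard_eq_one]
    refine ⟨ι.symm ⟨t, ht⟩, ?_⟩
    ext x
    rw [Set.mem_singleton_iff, Equiv.eq_symm_apply]
    exact (Subtype.ext_iff (a2 := ⟨t, ht⟩)).symm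

theorem isCordialLabeling_completeBipartiteGraph [Fintype α] [Fintype β] [AddCommGroup A]
    [Fintype A] {m : A} (ι : α ≃ {a // a ≠ m}) {g : β → A} (hg : IsEquitable g)
    (hm : ∀ a, {y | g y = a}.ncard ≤ {y | g y = m}.ncard) :
    IsCordialLabeling (completeBipartiteGraph α β) (Sum.elim (fun x ↦ (ι x : A)) g) := by
  classical
  constructor
  · intro a b
    rw [ncard_sumElim_fiber, ncard_sumElim_fiber, ncard_fiber_subtypeVal_ne,
      ncard_fiber_subtypeVal_ne, abs_sub_le_iff]
    have := hg a b; have := hg b a; have := hm a; have := hm b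
    split_ifs with ha hb hb <;> (try subst ha) <;> (try subst hb) <;> omega
  · intro a b
    have ha := ncard_val_add_fiber_add_ncard_fiber_sub ι g a
    have hb := ncard_val_add_fiber_add_ncard_fiber_sub ι g b
    have := hg (a - m) (b - m); have := hg (b - m) (a - m)
    simp only [ncard_edgeLabel_fiber_completeBipartiteGraph, Sum.elim_inl, Sum.elim_inr]
    rw [abs_sub_le_iff]
    omega

theorem isCordial_completeBipartiteGraph [Fintype α] [Fintype β] [AddCommGroup A] [Fintype A]
    (h : Fintype.card α + 1 = Fintype.card A) :
    IsCordial (completeBipartiteGraph α β) A := by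
  classical
  have : Nonempty A := Fintype.card_pos_iff.mp (by omega)
  obtain ⟨g, hg⟩ := exists_isEquitable β A
  obtain ⟨m, hm⟩ := Finite.exists_max fun a ↦ {y | g y = a}.ncard
  have ι : α ≃ {a // a ≠ m} := Fintype.equivOfCardEq (by simp; omega)
  exact ⟨_, isCordialLabeling_completeBipartiteGraph ι hg hm⟩

theorem stmt_14 : ∀ n : ℕ, 3 ≤ n →
    IsCordial (completeBipartiteGraph (Fin 3) (Fin n)) (ZMod 2 × ZMod 2) :=
  fun _ _ ↦ isCordial_completeBipartiteGraph rfl
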